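/- arXiv:1810.11402 — 4 statements merged into one kernel-verified Lean document; each statement's English description precedes it below -/
import Mathlib

section
/- Let x : [-τ, T] → ℝ be continuous with x ≡ 0 on [-τ, 0], and suppose there exist constants k₁, k₂ ≥ 0 such that x(t) ≤ k₁ + k₂ ∫₀ᵗ (x(s) + max_{r ∈ [s-τ, s]} x(r)) ds for all t ∈ [0, T]. Then x(t) ≤ k₁ · exp(2 k₂ t) for all t ∈ [0, T]. -/
/-!
The running maximum `M t = max_{[0, t]} x` is nonnegative (as `x 0 = 0`) and dominates both
`x s` and the delayed maximum `max_{[s - τ, s]} x` (since `x` vanishes on `[-τ, 0]`), so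
`x t ≤ k₁ + 2 k₂ ∫₀ᵗ M`. The right-hand side is nondecreasing in `t`, hence `M` satisfies the same
inequality, and the integral form of Grönwall's inequality gives `M t ≤ k₁ exp (2 k₂ t)`.
-/

open MeasureTheory intervalIntegral Set Real Topology

theorem ContinuousOn.exists_continuous_eqOn {X : Type*} [TopologicalSpace X] [NormalSpace X]
    {s : Set X} (hs : IsClosed s) {f : X → ℝ} (hf : ContinuousOn f s) :
    ∃ g : X → ℝ, Continuous g ∧ EqOn g f s := by
  obtain ⟨g, hg⟩ := ContinuousMap.exists_restrict_eq hs ⟨s.domRestrict f, hf.domRestrict⟩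
  exact ⟨g, g.continuous, fun x hx => congrArg (· ⟨x, hx⟩) hg⟩

theorem continuous_sSup_image_uIcc {f a b : ℝ → ℝ} (hf : Continuous f) (ha : Continuous a)
    (hb : Continuous b) : Continuous fun t => sSup (f '' uIcc (a t) (b t)) := by
  have hseg : ∀ t, uIcc (a t) (b t) = AffineMap.lineMap (a t) (b t) '' Icc (0 : ℝ) 1 := fun t => by
    rw [← segment_eq_image_lineMap, segment_eq_uIcc]
  simp_rw [hseg, image_image, AffineMap.lineMap_apply_ring']
  exact isCompact_Icc.continuous_sSup (by fun_prop)

theorem sSup_image_Icc_le_of_monotoneOn {f g : ℝ → ℝ} {a t : ℝ} (hat : a ≤ t)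
    (hg : MonotoneOn g (Icc a t)) (hfg : ∀ s ∈ Icc a t, f s ≤ g s) :
    sSup (f '' Icc a t) ≤ g t :=
  csSup_le ((nonempty_Icc.2 hat).image f) <| forall_mem_image.2 fun s hs =>
    (hfg s hs).trans (hg hs (right_mem_Icc.2 hat) hs.2)

theorem add_mul_gronwallBound_zero (c K x : ℝ) :
    c + K * gronwallBound 0 K c x = c * exp (K * x) := by
  rcases eq_or_ne K 0 with rfl | hK
  · simp
  · rw [gronwallBound_of_K_ne_0 hK]
    field_simp
    ring

theorem hasDerivWithinAt_integral_Ici {φ : ℝ → ℝ} {a b t : ℝ} (hφ : ContinuousOn φ (Icc a b))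
    (ht : t ∈ Ico a b) : HasDerivWithinAt (fun u => ∫ s in a..u, φ s) (φ t) (Ici t) t := by
  have hnhds : Icc a b ∈ 𝓝[>] t := Icc_mem_nhdsGT_of_mem ht
  exact integral_hasDerivWithinAt_right
    ((hφ.mono (Icc_subset_Icc_right ht.2.le)).intervalIntegrable_of_Icc ht.1)
    ((hφ.stronglyMeasurableAtFilter_nhdsWithin measurableSet_Icc t).filter_mono
      (nhdsWithin_le_of_mem hnhds))
    ((hφ t (Ico_subset_Icc_self ht)).mono_of_mem_nhdsWithin hnhds)

theorem continuousOn_integral_Icc {φ : ℝ → ℝ} {a b : ℝ} (hφ : ContinuousOn φ (Icc a b)) :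
    ContinuousOn (fun u => ∫ s in a..u, φ s) (Icc a b) := by
  rcases le_or_gt a b with hab | hab
  · refine (continuousOn_primitive_interval (μ := volume) ?_).mono Icc_subset_uIcc
    rw [uIcc_of_le hab]
    exact hφ.integrableOn_Icc
  · simp [Icc_eq_empty_of_lt hab]

theorem le_mul_exp_of_le_add_mul_integral {φ : ℝ → ℝ} {a b c K : ℝ}
    (hφ : ContinuousOn φ (Icc a b)) (hK : 0 ≤ K)
    (h : ∀ t ∈ Icc a b, φ t ≤ c + K * ∫ s in a..t, φ s) :
    ∀ t ∈ Icc a b, φ t ≤ c * exp (K * (t - a)) := by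
  have hF : ∀ t ∈ Icc a b, ∫ s in a..t, φ s ≤ gronwallBound 0 K c (t - a) :=
    le_gronwallBound_of_liminf_deriv_right_le (f' := φ) (continuousOn_integral_Icc hφ)
      (fun t ht _ hr => (hasDerivWithinAt_integral_Ici hφ ht).liminf_right_slope_le hr)
      (by simp) (fun t ht => by linarith [h t (Ico_subset_Icc_self ht)])
  intro t ht
  calc φ t ≤ c + K * ∫ s in a..t, φ s := h t ht
    _ ≤ c + K * gronwallBound 0 K c (t - a) := by gcongr; exact hF t ht
    _ = c * exp (K * (t - a)) := add_mul_gronwallBound_zero c K (t - a)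

/-- The maximum of `x` over `[0, t]`; using `uIcc` makes it continuous on all of `ℝ`. -/
noncomputable def runningMax (x : ℝ → ℝ) (t : ℝ) : ℝ := sSup (x '' uIcc 0 t)

section DelayedGronwall

variable {x : ℝ → ℝ} {τ : ℝ}

theorem continuous_runningMax (hx : Continuous x) : Continuous (runningMax x) :=
  continuous_sSup_image_uIcc hx continuous_const continuous_id

theorem le_runningMax (hx : Continuous x) {s t : ℝ} (hs : s ∈ uIcc 0 t) : x s ≤ runningMax x t :=
  le_csSup (isCompact_uIcc.bddAbove_image hx.continuousOn) (mem_image_of_mem x hs)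

theorem runningMax_nonneg (hx : Continuous x) (hx0 : x 0 = 0) (t : ℝ) : 0 ≤ runningMax x t :=
  hx0 ▸ le_runningMax hx left_mem_uIcc

theorem continuous_sSup_image_Icc_sub (hx : Continuous x) (hτ : 0 ≤ τ) :
    Continuous fun s => sSup (x '' Icc (s - τ) s) := by
  convert continuous_sSup_image_uIcc (a := fun s => s - τ) (b := fun s => s) hx
    (by fun_prop) continuous_id using 3 with s
  rw [uIcc_of_le (sub_le_self s hτ)]

theorem sSup_image_Icc_sub_le_runningMax (hx : Continuous x) (hτ : 0 ≤ τ)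
    (hx0 : ∀ t ∈ Icc (-τ) 0, x t = 0) {s : ℝ} (hs : 0 ≤ s) :
    sSup (x '' Icc (s - τ) s) ≤ runningMax x s := by
  have hM0 := runningMax_nonneg hx (hx0 0 ⟨neg_nonpos.2 hτ, le_rfl⟩) s
  refine Real.sSup_le (forall_mem_image.2 fun r hr => ?_) hM0
  rcases le_or_gt r 0 with hr0 | hr0
  · rw [hx0 r ⟨by linarith [hr.1], hr0⟩]
    exact hM0
  · exact le_runningMax hx (by rw [uIcc_of_le hs]; exact ⟨hr0.le, hr.2⟩)

variable {T k₁ k₂ : ℝ}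

theorem le_add_two_mul_integral_runningMax (hx : Continuous x) (hτ : 0 ≤ τ)
    (hx0 : ∀ t ∈ Icc (-τ) 0, x t = 0) (hk₂ : 0 ≤ k₂)
    (hineq : ∀ t ∈ Icc 0 T, x t ≤ k₁ + k₂ * ∫ s in (0:ℝ)..t, (x s + sSup (x '' Icc (s - τ) s)))
    {t : ℝ} (ht : t ∈ Icc 0 T) : x t ≤ k₁ + 2 * k₂ * ∫ s in (0:ℝ)..t, runningMax x s := by
  have hint : ∫ s in (0:ℝ)..t, (x s + sSup (x '' Icc (s - τ) s))
      ≤ 2 * ∫ s in (0:ℝ)..t, runningMax x s := by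
    rw [← intervalIntegral.integral_const_mul]
    refine integral_mono_on ht.1
      ((hx.add (continuous_sSup_image_Icc_sub hx hτ)).intervalIntegrable 0 t)
      ((continuous_const.mul (continuous_runningMax hx)).intervalIntegrable 0 t) fun s hs => ?_
    linarith [le_runningMax hx (t := s) right_mem_uIcc,
      sSup_image_Icc_sub_le_runningMax hx hτ hx0 hs.1]
  nlinarith [hineq t ht]

theorem runningMax_le_add_two_mul_integral (hx : Continuous x) (hτ : 0 ≤ τ)
    (hx0 : ∀ t ∈ Icc (-τ) 0, x t = 0) (hk₂ : 0 ≤ k₂)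
    (hineq : ∀ t ∈ Icc 0 T, x t ≤ k₁ + k₂ * ∫ s in (0:ℝ)..t, (x s + sSup (x '' Icc (s - τ) s)))
    {t : ℝ} (ht : t ∈ Icc 0 T) :
    runningMax x t ≤ k₁ + 2 * k₂ * ∫ s in (0:ℝ)..t, runningMax x s := by
  have hmono : MonotoneOn (fun u => k₁ + 2 * k₂ * ∫ s in (0:ℝ)..u, runningMax x s) (Icc 0 t) :=
    fun u hu v _ huv => by
      have := integral_mono_interval le_rfl hu.1 huv
        (Filter.Eventually.of_forall (runningMax_nonneg hx (hx0 0 ⟨neg_nonpos.2 hτ, le_rfl⟩)))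
        ((continuous_runningMax hx).intervalIntegrable (μ := volume) 0 v)
      dsimp only
      nlinarith
  rw [runningMax, uIcc_of_le ht.1]
  exact sSup_image_Icc_le_of_monotoneOn ht.1 hmono fun s hs =>
    le_add_two_mul_integral_runningMax hx hτ hx0 hk₂ hineq ⟨hs.1, hs.2.trans ht.2⟩

theorem le_mul_exp_of_delayed_integral_le (hx : Continuous x) (hτ : 0 ≤ τ)
    (hx0 : ∀ t ∈ Icc (-τ) 0, x t = 0) (hk₂ : 0 ≤ k₂)
    (hineq : ∀ t ∈ Icc 0 T, x t ≤ k₁ + k₂ * ∫ s in (0:ℝ)..t, (x s + sSup (x '' Icc (s - τ) s)))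
    {t : ℝ} (ht : t ∈ Icc 0 T) : x t ≤ k₁ * exp (2 * k₂ * t) := by
  have hM := le_mul_exp_of_le_add_mul_integral (continuous_runningMax hx).continuousOn
    (by positivity) (fun t ht => runningMax_le_add_two_mul_integral hx hτ hx0 hk₂ hineq ht) t ht
  rw [sub_zero] at hM
  exact (le_runningMax hx right_mem_uIcc).trans hM

end DelayedGronwall

theorem stmt0_general (τ T : ℝ) (hτ : 0 < τ) (x : ℝ → ℝ)
    (hx : ContinuousOn x (Set.Icc (-τ) T))
    (hx0 : ∀ t ∈ Set.Icc (-τ) (0:ℝ), x t = 0)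
    (k₁ k₂ : ℝ) (hk₂ : 0 ≤ k₂)
    (hineq : ∀ t ∈ Set.Icc (0:ℝ) T,
      x t ≤ k₁ + k₂ * ∫ s in (0:ℝ)..t, (x s + sSup (x '' Set.Icc (s - τ) s))) :
    ∀ t ∈ Set.Icc (0:ℝ) T, x t ≤ k₁ * Real.exp (2 * k₂ * t) := by
  intro t ht
  obtain ⟨y, hy, hyx⟩ := hx.exists_continuous_eqOn isClosed_Icc
  have hwin : ∀ s ∈ Icc 0 T, Icc (s - τ) s ⊆ Icc (-τ) T := fun s hs =>
    Icc_subset_Icc (by linarith [hs.1]) hs.2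
  have hyx' : ∀ s ∈ Icc 0 T, y s = x s := fun s hs =>
    hyx (hwin s hs (right_mem_Icc.2 (by linarith)))
  have hy0 : ∀ s ∈ Icc (-τ) 0, y s = 0 := fun s hs =>
    (hyx ⟨hs.1, hs.2.trans (ht.1.trans ht.2)⟩).trans (hx0 s hs)
  have hyineq : ∀ s ∈ Icc 0 T,
      y s ≤ k₁ + k₂ * ∫ r in (0:ℝ)..s, (y r + sSup (y '' Icc (r - τ) r)) := by
    intro s hs
    rw [hyx' s hs, integral_congr fun r hr => ?_]
    · exact hineq s hs
    rw [uIcc_of_le hs.1] at hr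
    have hr' : r ∈ Icc 0 T := ⟨hr.1, hr.2.trans hs.2⟩
    simp only [hyx' r hr', (hyx.mono (hwin r hr')).image_eq]
  exact hyx' t ht ▸ le_mul_exp_of_delayed_integral_le hy hτ.le hy0 hk₂ hyineq ht

/-- Gronwall-type integral inequality for functions involving a delayed supremum. -/
theorem stmt0 (τ T : ℝ) (hτ : 0 < τ) (hT : 0 < T) (x : ℝ → ℝ)
    (hx : ContinuousOn x (Set.Icc (-τ) T))
    (hx0 : ∀ t ∈ Set.Icc (-τ) (0:ℝ), x t = 0)
    (k₁ k₂ : ℝ) (hk₁ : 0 ≤ k₁) (hk₂ : 0 ≤ k₂)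
    (hineq : ∀ t ∈ Set.Icc (0:ℝ) T,
      x t ≤ k₁ + k₂ * ∫ s in (0:ℝ)..t, (x s + sSup (x '' Set.Icc (s - τ) s))) :
    ∀ t ∈ Set.Icc (0:ℝ) T, x t ≤ k₁ * Real.exp (2 * k₂ * t) :=
  stmt0_general τ T hτ x hx hx0 k₁ k₂ hk₂ hineq
end

section
/- Consider the scalar delay equation x'(t) = (1/10) max_{s ∈ [t-2,t]} (u(t) x(s)) on (0,1) with x = φ on [-2,0], where φ : [-2,0] → ℝ is continuous with φ(0) = 0 and both φ|_{[-2,-1]} and φ|_{[-1,0]} have range [-10,10], and where u : (0,1) → ℝ is measurable with -1 ≤ u ≤ 3. Then any solution x ∈ C([-2,1]) ∩ W^{1,∞}(0,1) satisfies |x(t)| ≤ 30/7 for all t ∈ [0,1], and consequently max_{s ∈ [t-2,t]} (u(t) x(s)) = 10 |u(t)| for a.e. t ∈ (0,1), so x'(t) = |u(t)| a.e. -/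
open MeasureTheory Set

/-!
On `[-1, 0] ⊆ [t - 2, t]` the history attains both `10` and `-10`, so the maximum of
`u(t) x(s)` over the delay window is `10 |u(t)|` as long as `|x| ≤ 10` on `[0, t]`.
While that holds, `|x'| = |u| ≤ 3`, hence `|x(t)| ≤ 3t < 10`; by continuity `|x|` can therefore
never reach `10` on `[0, 1]`. So `x(t) = ∫₀ᵗ |u|`, and the Lebesgue differentiation theorem
gives `x' = |u|` almost everywhere.
-/

theorem ContinuousOn.forall_mem_Icc_lt_of_forall_Ico_lt {g : ℝ → ℝ} {a b c : ℝ}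
    (hg : ContinuousOn g (Icc a b))
    (h : ∀ t ∈ Icc a b, (∀ s ∈ Ico a t, g s < c) → g t < c) : ∀ t ∈ Icc a b, g t < c := by
  by_contra! hex
  set K := Icc a b ∩ g ⁻¹' Ici c
  have hK : IsClosed K := hg.preimage_isClosed_of_isClosed isClosed_Icc isClosed_Ici
  have hKne : K.Nonempty := hex
  have hKbdd : BddBelow K := ⟨a, fun t ht => ht.1.1⟩
  have hmem : sInf K ∈ K := hK.csInf_mem hKne hKbdd
  refine not_lt.2 hmem.2 (h _ hmem.1 fun s hs => ?_)
  by_contra! hcs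
  exact not_le.2 hs.2 (csInf_le hKbdd ⟨⟨hs.1, hs.2.le.trans hmem.1.2⟩, hcs⟩)

theorem sSup_image_const_mul_eq {S : Set ℝ} {f : ℝ → ℝ} {M : ℝ} (a : ℝ)
    (hbound : ∀ s ∈ S, |f s| ≤ M) (hM : M ∈ f '' S) (hnegM : -M ∈ f '' S) :
    sSup ((fun s => a * f s) '' S) = M * |a| := by
  refine IsGreatest.csSup_eq ⟨?_, ?_⟩
  · rcases le_total 0 a with ha | ha
    · obtain ⟨s, hs, hfs⟩ := hM
      exact ⟨s, hs, by simp only [hfs, abs_of_nonneg ha, mul_comm]⟩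
    · obtain ⟨s, hs, hfs⟩ := hnegM
      exact ⟨s, hs, by simp only [hfs, abs_of_nonpos ha]; ring⟩
  · rintro _ ⟨s, hs, rfl⟩
    calc a * f s ≤ |a| * |f s| := (le_abs_self _).trans (abs_mul _ _).le
      _ ≤ |a| * M := mul_le_mul_of_nonneg_left (hbound s hs) (abs_nonneg a)
      _ = M * |a| := mul_comm _ _

theorem abs_intervalIntegral_le_of_ae_abs_le {f : ℝ → ℝ} {a b C : ℝ} (hab : a ≤ b)
    (h : ∀ᵐ r ∂volume.restrict (Ioo a b), |f r| ≤ C) : |∫ r in a..b, f r| ≤ C * (b - a) := by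
  rw [Measure.restrict_congr_set Ioo_ae_eq_Ioc, ae_restrict_iff' measurableSet_Ioc] at h
  rw [← uIoc_of_le hab] at h
  simpa only [Real.norm_eq_abs, abs_of_nonneg (sub_nonneg.2 hab)] using
    intervalIntegral.norm_integral_le_of_norm_le_const_ae (f := f) h

theorem Measurable.intervalIntegrable_of_ae_abs_le {f : ℝ → ℝ} {a b C : ℝ} (hf : Measurable f)
    (hab : a ≤ b) (h : ∀ᵐ r ∂volume.restrict (Ioo a b), |f r| ≤ C) :
    IntervalIntegrable f volume a b :=
  (intervalIntegrable_iff_integrableOn_Ioo_of_le hab).2 <|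
    Measure.integrableOn_of_bounded (by simp) hf.aestronglyMeasurable h

theorem ae_hasDerivAt_of_eqOn_intervalIntegral {f F : ℝ → ℝ} {a b : ℝ}
    (hf : IntervalIntegrable f volume a b) (hF : ∀ t ∈ Icc a b, F t = ∫ r in a..t, f r) :
    ∀ᵐ t ∂volume.restrict (Ioo a b), HasDerivAt F (f t) t := by
  rw [ae_restrict_iff' measurableSet_Ioo]
  filter_upwards [hf.ae_hasDerivAt_integral] with t hderiv ht
  have hFeq : F =ᶠ[nhds t] fun y => ∫ r in a..y, f r :=
    Filter.eventually_of_mem (Icc_mem_nhds ht.1 ht.2) hF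
  exact (hderiv (Icc_subset_uIcc (Ioo_subset_Icc_self ht)) a left_mem_uIcc).congr_of_eventuallyEq
    hFeq

theorem sSup_delay_window_eq {φ x : ℝ → ℝ} {M : ℝ} (u : ℝ)
    (hr1 : φ '' Icc (-2:ℝ) (-1) = Icc (-M) M) (hr2 : φ '' Icc (-1:ℝ) 0 = Icc (-M) M)
    (hinit : ∀ t ∈ Icc (-2:ℝ) 0, x t = φ t) {r : ℝ} (hr : r ∈ Icc (0:ℝ) 1)
    (hx : ∀ s ∈ Icc 0 r, |x s| ≤ M) :
    sSup ((fun s => u * x s) '' Icc (r - 2) r) = M * |u| := by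
  have hwindow : Icc (-1:ℝ) 0 ⊆ Icc (r - 2) r := Icc_subset_Icc (by linarith [hr.2]) hr.1
  have hxφ : EqOn x φ (Icc (-1:ℝ) 0) := fun s hs => hinit s ⟨by linarith [hs.1], hs.2⟩
  have hM : -M ≤ M := nonempty_Icc.1 (hr2 ▸ (nonempty_Icc.2 (by norm_num)).image φ)
  have hattained : ∀ y ∈ Icc (-M) M, y ∈ x '' Icc (r - 2) r := fun y hy => by
    rw [← hr2, ← hxφ.image_eq] at hy
    exact image_mono hwindow hy
  refine sSup_image_const_mul_eq u (fun s hs => ?_) (hattained M ⟨hM, le_rfl⟩)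
    (hattained (-M) ⟨le_rfl, hM⟩)
  rcases le_total s 0 with hs0 | hs0
  · rw [hinit s ⟨by linarith [hs.1, hr.1], hs0⟩, abs_le]
    rcases le_total s (-1) with hs1 | hs1
    · exact (hr1 ▸ mem_image_of_mem φ ⟨by linarith [hs.1, hr.1], hs1⟩ : φ s ∈ Icc (-M) M)
    · exact (hr2 ▸ mem_image_of_mem φ ⟨hs1, hs0⟩ : φ s ∈ Icc (-M) M)
  · exact hx s ⟨hs0, hs.2⟩

theorem abs_le_three_mul_of_forall_Ico_lt {φ u x : ℝ → ℝ}
    (hr1 : φ '' Icc (-2:ℝ) (-1) = Icc (-10:ℝ) 10) (hr2 : φ '' Icc (-1:ℝ) 0 = Icc (-10:ℝ) 10)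
    (hub : ∀ᵐ t ∂(volume.restrict (Ioo (0:ℝ) 1)), u t ∈ Icc (-1:ℝ) 3)
    (hinit : ∀ t ∈ Icc (-2:ℝ) 0, x t = φ t)
    (heq : ∀ t ∈ Icc (0:ℝ) 1,
      x t = ∫ r in (0:ℝ)..t, (1/10) * sSup ((fun s => u r * x s) '' Icc (r - 2) r))
    {t : ℝ} (ht : t ∈ Icc (0:ℝ) 1) (hlt : ∀ s ∈ Ico 0 t, |x s| < 10) : |x t| ≤ 3 * t := by
  have hintegrand : ∀ᵐ r ∂volume.restrict (Ioo 0 t),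
      |(1/10) * sSup ((fun s => u r * x s) '' Icc (r - 2) r)| ≤ 3 := by
    filter_upwards [ae_restrict_of_ae_restrict_of_subset (Ioo_subset_Ioo_right ht.2) hub,
      ae_restrict_mem measurableSet_Ioo] with r hu hr
    rw [sSup_delay_window_eq (u r) hr1 hr2 hinit ⟨hr.1.le, hr.2.le.trans ht.2⟩
      fun s hs => (hlt s ⟨hs.1, hs.2.trans_lt hr.2⟩).le]
    rw [show (1/10 : ℝ) * (10 * |u r|) = |u r| by ring, abs_abs, abs_le]
    exact ⟨by linarith [hu.1], hu.2⟩
  simpa [heq t ht] using abs_intervalIntegral_le_of_ae_abs_le ht.1 hintegrand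

theorem stmt13_general (φ : ℝ → ℝ)
    (hr1 : φ '' Set.Icc (-2:ℝ) (-1) = Set.Icc (-10:ℝ) 10)
    (hr2 : φ '' Set.Icc (-1:ℝ) 0 = Set.Icc (-10:ℝ) 10)
    (u : ℝ → ℝ) (hu : Measurable u)
    (hub : ∀ᵐ t ∂(volume.restrict (Set.Ioo (0:ℝ) 1)), u t ∈ Set.Icc (-1:ℝ) 3)
    (x : ℝ → ℝ) (hxc : ContinuousOn x (Set.Icc (-2:ℝ) 1))
    (hinit : ∀ t ∈ Set.Icc (-2:ℝ) 0, x t = φ t)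
    (heq : ∀ t ∈ Set.Icc (0:ℝ) 1,
      x t = ∫ r in (0:ℝ)..t, (1/10) * sSup ((fun s => u r * x s) '' Set.Icc (r - 2) r)) :
    (∀ t ∈ Set.Icc (0:ℝ) 1, |x t| ≤ 30/7) ∧
    (∀ᵐ t ∂(volume.restrict (Set.Ioo (0:ℝ) 1)),
      sSup ((fun s => u t * x s) '' Set.Icc (t - 2) t) = 10 * |u t|) ∧
    (∀ᵐ t ∂(volume.restrict (Set.Ioo (0:ℝ) 1)), HasDerivAt x (|u t|) t) := by
  have hbound : ∀ t ∈ Icc (0:ℝ) 1, (∀ s ∈ Ico 0 t, |x s| < 10) → |x t| ≤ 3 * t :=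
    fun _ => abs_le_three_mul_of_forall_Ico_lt hr1 hr2 hub hinit heq
  have hlt : ∀ t ∈ Icc (0:ℝ) 1, |x t| < 10 :=
    (hxc.mono (Icc_subset_Icc (by norm_num) le_rfl)).abs.forall_mem_Icc_lt_of_forall_Ico_lt
      fun t ht hlt => (hbound t ht hlt).trans_lt (by linarith [ht.2])
  have hsSup : ∀ r ∈ Icc (0:ℝ) 1, sSup ((fun s => u r * x s) '' Icc (r - 2) r) = 10 * |u r| :=
    fun r hr => sSup_delay_window_eq (u r) hr1 hr2 hinit hr
      fun s hs => (hlt s ⟨hs.1, hs.2.trans hr.2⟩).le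
  have hxint : ∀ t ∈ Icc (0:ℝ) 1, x t = ∫ r in (0:ℝ)..t, |u r| := fun t ht => by
    rw [heq t ht]
    refine intervalIntegral.integral_congr fun r hr => ?_
    rw [uIcc_of_le ht.1] at hr
    simp only [hsSup r ⟨hr.1, hr.2.trans ht.2⟩]
    ring
  have hintegrable : IntervalIntegrable (fun r => |u r|) volume 0 1 :=
    hu.abs.intervalIntegrable_of_ae_abs_le zero_le_one <| hub.mono fun r hr => by
      rw [abs_abs, abs_le]
      exact ⟨by linarith [hr.1], hr.2⟩
  refine ⟨fun t ht => (hbound t ht fun s hs => hlt s ⟨hs.1, hs.2.le.trans ht.2⟩).trans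
    (by linarith [ht.2]), ?_, ae_hasDerivAt_of_eqOn_intervalIntegral hintegrable hxint⟩
  exact ae_restrict_of_forall_mem measurableSet_Ioo fun t ht => hsSup t ⟨ht.1.le, ht.2.le⟩

/-- For the scalar delay equation `x' = (1/10) max_{s∈[t-2,t]} (u(t) x(s))` with the given
initial history, any solution is bounded by 30/7, the maximum evaluates to `10 |u(t)|`,
and hence `x'(t) = |u(t)|` a.e. -/
theorem stmt13 (φ : ℝ → ℝ) (hφc : ContinuousOn φ (Set.Icc (-2:ℝ) 0)) (hφ0 : φ 0 = 0)
    (hr1 : φ '' Set.Icc (-2:ℝ) (-1) = Set.Icc (-10:ℝ) 10)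
    (hr2 : φ '' Set.Icc (-1:ℝ) 0 = Set.Icc (-10:ℝ) 10)
    (u : ℝ → ℝ) (hu : Measurable u)
    (hub : ∀ᵐ t ∂(volume.restrict (Set.Ioo (0:ℝ) 1)), u t ∈ Set.Icc (-1:ℝ) 3)
    (x : ℝ → ℝ) (hxc : ContinuousOn x (Set.Icc (-2:ℝ) 1))
    (hlip : ∃ C, LipschitzOnWith C x (Set.Icc (0:ℝ) 1))
    (hinit : ∀ t ∈ Set.Icc (-2:ℝ) 0, x t = φ t)
    (heq : ∀ t ∈ Set.Icc (0:ℝ) 1,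
      x t = ∫ r in (0:ℝ)..t, (1/10) * sSup ((fun s => u r * x s) '' Set.Icc (r - 2) r)) :
    (∀ t ∈ Set.Icc (0:ℝ) 1, |x t| ≤ 30/7) ∧
    (∀ᵐ t ∂(volume.restrict (Set.Ioo (0:ℝ) 1)),
      sSup ((fun s => u t * x s) '' Set.Icc (t - 2) t) = 10 * |u t|) ∧
    (∀ᵐ t ∂(volume.restrict (Set.Ioo (0:ℝ) 1)), HasDerivAt x (|u t|) t) :=
  stmt13_general φ hr1 hr2 u hu hub x hxc hinit heq
end

section
/- Let u : (0,1) → ℝ be measurable with -1 ≤ u(t) ≤ 3 a.e., set a := ∫_{{u<0}} u dt and b := ∫_{{u>0}} u dt, and let x(t) := ∫₀ᵗ |u(s)| ds. If ∫₀¹ |x(t) - 2t|² dt + ∫₀¹ u(t) dt + 4|x(1) - 2| ≤ 1, then a contradiction follows; i.e., the value ∫₀¹ |x(t) - 2t|² dt + ∫₀¹ u dt + 4|x(1)-2| is strictly greater than 1 for every such u. -/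
/-!
Since `-1 ≤ u ≤ 3`, pointwise `2|u| - 3 ≤ u`, so with `x t = ∫₀ᵗ |u|` we get
`∫₀¹ u ≥ 2 x(1) - 3`, and the objective is at least
`∫₀¹ |x t - 2t|² + 1 + 2 (x(1) - 2) + 4 |x(1) - 2| ≥ 1`.
Objective `≤ 1` therefore forces `x(1) = 2` and, by continuity of `x`, `x t = 2t` on `[0,1]`.
By Lebesgue differentiation `|u| = 2` a.e., hence `u = 2` a.e. (as `u ≥ -1`), and then the
objective equals `0 + 2 + 0 = 2`.
-/

open MeasureTheory Set Filter intervalIntegral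

lemma two_mul_abs_sub_three_le {y : ℝ} (hy : y ∈ Icc (-1 : ℝ) 3) : 2 * |y| - 3 ≤ y := by
  rcases abs_cases y with ⟨h, _⟩ | ⟨h, _⟩ <;> rw [h] <;> linarith [hy.1, hy.2]

lemma two_mul_integral_abs_sub_le_integral {u : ℝ → ℝ} {a b : ℝ} (hab : a ≤ b)
    (hu : IntervalIntegrable u volume a b)
    (hub : ∀ᵐ t ∂volume.restrict (Icc a b), u t ∈ Icc (-1 : ℝ) 3) :
    2 * (∫ t in a..b, |u t|) - 3 * (b - a) ≤ ∫ t in a..b, u t :=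
  calc 2 * (∫ t in a..b, |u t|) - 3 * (b - a) = ∫ t in a..b, (2 * |u t| - 3) := by
        rw [integral_sub (hu.abs.const_mul 2) intervalIntegrable_const,
          intervalIntegral.integral_const_mul, intervalIntegral.integral_const, smul_eq_mul,
          mul_comm (b - a)]
    _ ≤ ∫ t in a..b, u t :=
        integral_mono_ae_restrict hab ((hu.abs.const_mul 2).sub intervalIntegrable_const) hu
          (hub.mono fun _ => two_mul_abs_sub_three_le)

lemma eqOn_of_integral_sq_abs_sub_eq_zero {F G : ℝ → ℝ} {a b : ℝ} (hab : a < b)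
    (hF : ContinuousOn F (Icc a b)) (hG : ContinuousOn G (Icc a b))
    (h : ∫ t in a..b, |F t - G t| ^ 2 = 0) : EqOn F G (Icc a b) := by
  intro c hc
  by_contra hne
  have hpos := integral_pos hab ((hF.sub hG).abs.pow 2) (fun _ _ => sq_nonneg _)
    ⟨c, hc, pow_pos (abs_pos.mpr (sub_ne_zero.mpr hne)) 2⟩
  exact hpos.ne' h

lemma ae_eq_deriv_of_primitive_eqOn {f g g' : ℝ → ℝ} {a b : ℝ}
    (hf : IntervalIntegrable f volume a b) (h : EqOn (fun t => ∫ s in a..t, f s) g (Ioo a b))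
    (hg : ∀ t ∈ Ioo a b, HasDerivAt g (g' t) t) :
    ∀ᵐ t ∂volume.restrict (Ioo a b), f t = g' t := by
  rw [ae_restrict_iff' measurableSet_Ioo]
  filter_upwards [hf.ae_hasDerivAt_integral] with t ht htab
  have hF := ht (Ioo_subset_Icc_self.trans Icc_subset_uIcc htab) a left_mem_uIcc
  exact hF.unique ((hg t htab).congr_of_eventuallyEq
    (eventually_of_mem (isOpen_Ioo.mem_nhds htab) h))

/-- Key step for non-existence of optimal controls: the objective value is strictly
greater than 1 for every admissible control. -/
theorem stmt14 (u : ℝ → ℝ) (hu : Measurable u)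
    (hub : ∀ᵐ t ∂(volume.restrict (Set.Ioo (0:ℝ) 1)), u t ∈ Set.Icc (-1:ℝ) 3) :
    1 < (∫ t in (0:ℝ)..1, |(∫ s in (0:ℝ)..t, |u s|) - 2 * t| ^ 2) +
      (∫ t in (0:ℝ)..1, u t) + 4 * |(∫ s in (0:ℝ)..1, |u s|) - 2| := by
  by_contra! hJ
  set x : ℝ → ℝ := fun t => ∫ s in (0:ℝ)..t, |u s|
  change (∫ t in (0:ℝ)..1, |x t - 2 * t| ^ 2) + (∫ t in (0:ℝ)..1, u t) + 4 * |x 1 - 2| ≤ 1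
    at hJ
  have hub_Icc : ∀ᵐ t ∂volume.restrict (Icc (0:ℝ) 1), u t ∈ Icc (-1:ℝ) 3 := by
    rwa [← Measure.restrict_congr_set Ioo_ae_eq_Icc]
  have hu_int : IntervalIntegrable u volume 0 1 :=
    (intervalIntegrable_iff_integrableOn_Ioo_of_le zero_le_one).mpr <|
      Measure.integrableOn_of_bounded (M := 3) measure_Ioo_lt_top.ne hu.aestronglyMeasurable <|
        hub.mono fun t ht => abs_le.mpr ⟨by linarith [ht.1], ht.2⟩
  have hlower : 2 * x 1 - 3 * (1 - 0) ≤ ∫ t in (0:ℝ)..1, u t :=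
    two_mul_integral_abs_sub_le_integral zero_le_one hu_int hub_Icc
  have hQ : 0 ≤ ∫ t in (0:ℝ)..1, |x t - 2 * t| ^ 2 :=
    integral_nonneg zero_le_one fun _ _ => by positivity
  obtain ⟨hQ0, hx1⟩ : (∫ t in (0:ℝ)..1, |x t - 2 * t| ^ 2) = 0 ∧ x 1 = 2 := by
    rcases abs_cases (x 1 - 2) with ⟨h, _⟩ | ⟨h, _⟩ <;> rw [h] at hJ <;>
      constructor <;> linarith
  have hx : EqOn x (fun t => 2 * t) (Icc 0 1) :=
    eqOn_of_integral_sq_abs_sub_eq_zero zero_lt_one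
      (by simpa using continuousOn_primitive_interval' hu_int.abs left_mem_uIcc)
      (continuousOn_const.mul continuousOn_id) hQ0
  have habs : ∀ᵐ t ∂volume.restrict (Ioo (0:ℝ) 1), |u t| = 2 :=
    ae_eq_deriv_of_primitive_eqOn hu_int.abs (hx.mono Ioo_subset_Icc_self)
      fun t _ => by simpa using (hasDerivAt_id t).const_mul 2
  have hu2 : ∀ᵐ t ∂volume.restrict (Ioc (0:ℝ) 1), u t = 2 := by
    rw [← Measure.restrict_congr_set Ioo_ae_eq_Ioc]
    filter_upwards [habs, hub] with t h1 h2
    rcases abs_cases (u t) with ⟨h, _⟩ | ⟨h, _⟩ <;> linarith [h2.1]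
  have hI : ∫ t in (0:ℝ)..1, u t = 2 := by
    rw [integral_congr_ae_restrict (g := fun _ => (2:ℝ)) (by rwa [uIoc_of_le zero_le_one])]
    simp
  rw [hQ0, hI, hx1] at hJ
  norm_num at hJ
end

section
/- Let (Ω, μ) be a finite measure space with μ(Ω) > 0 and k > 0. For u ∈ L^∞(Ω), the functional LIE_k(u) = (1/k) log(∫_Ω exp(k u) dμ) is Fréchet differentiable with derivative LIE_k'(u) v = ∫_Ω exp(k u) v dμ / ∫_Ω exp(k u) dμ for v ∈ L^∞(Ω), and ‖LIE_k'(u)‖_{(L^∞)*} = 1 for every u. -/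
/-!
For `w ∈ L^∞` the integrand `exp (k w)` is essentially bounded, so `F w = ∫ exp (k w) dμ` is finite
and positive. Writing `exp (k (u + h)) = exp (k u) (1 + k h + r)` with `|r| ≤ (k h)²` once
`|k| ‖h‖∞ ≤ 1`, the remainder of `F` at `u` is at most `k² F(u) ‖h‖∞²`, so `F` is Fréchet
differentiable with derivative `v ↦ k ∫ exp (k u) v dμ`; the chain rule for `log` gives the
derivative of `(1/k) log F`. Integration against a nonnegative integrable weight `g` has norm
`∫ g` on `L^∞`: the bound `‖v‖∞ ∫ g` is attained at `v = 1`. For the weight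
`exp (k u) / F u` this norm is `1`.
-/

open MeasureTheory Asymptotics

namespace MeasureTheory.Lp

variable {Ω : Type*} [MeasurableSpace Ω] {μ : Measure Ω}

lemma ae_abs_le_norm_top (f : Lp ℝ ⊤ μ) : ∀ᵐ x ∂μ, |f x| ≤ ‖f‖ := by
  have hfin : eLpNormEssSup (f : Ω → ℝ) μ ≠ ⊤ := by
    simpa [eLpNorm_exponent_top] using Lp.eLpNorm_ne_top f
  filter_upwards [ae_le_eLpNormEssSup (f := (f : Ω → ℝ)) (μ := μ)] with x hx
  simpa [Lp.norm_def, eLpNorm_exponent_top, Real.norm_eq_abs] using ENNReal.toReal_mono hfin hx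

lemma integrable_exp_const_mul [IsFiniteMeasure μ] (k : ℝ) (w : Lp ℝ ⊤ μ) :
    Integrable (fun x ↦ Real.exp (k * w x)) μ := by
  refine .of_bound (Real.continuous_exp.comp_aestronglyMeasurable
    ((Lp.aestronglyMeasurable w).const_mul k)) (Real.exp (|k| * ‖w‖)) ?_
  filter_upwards [ae_abs_le_norm_top w] with x hx
  rw [Real.norm_eq_abs, abs_of_pos (Real.exp_pos _), Real.exp_le_exp]
  calc k * w x ≤ |k * w x| := le_abs_self _
    _ ≤ |k| * ‖w‖ := by rw [abs_mul]; gcongr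

lemma integrable_mul_coeFn_top {g : Ω → ℝ} (hg : Integrable g μ) (v : Lp ℝ ⊤ μ) :
    Integrable (fun x ↦ g x * v x) μ :=
  hg.mul_of_top_left (Lp.memLp v)

lemma norm_integral_mul_coeFn_top_le {g : Ω → ℝ} (hg : Integrable g μ) (v : Lp ℝ ⊤ μ) :
    ‖∫ x, g x * v x ∂μ‖ ≤ (∫ x, ‖g x‖ ∂μ) * ‖v‖ := by
  rw [← integral_mul_const]
  refine norm_integral_le_of_norm_le (hg.norm.mul_const _) ?_
  filter_upwards [ae_abs_le_norm_top v] with x hx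
  rw [norm_mul, Real.norm_eq_abs (v x)]
  gcongr

noncomputable def integralMulCLM {g : Ω → ℝ} (hg : Integrable g μ) : Lp ℝ ⊤ μ →L[ℝ] ℝ :=
  LinearMap.mkContinuous
    { toFun := fun v ↦ ∫ x, g x * v x ∂μ
      map_add' := fun v w ↦ by
        rw [← integral_add (integrable_mul_coeFn_top hg v) (integrable_mul_coeFn_top hg w)]
        refine integral_congr_ae ?_
        filter_upwards [Lp.coeFn_add v w] with x hx
        rw [hx, Pi.add_apply, mul_add]
      map_smul' := fun c v ↦ by
        rw [RingHom.id_apply, smul_eq_mul, ← integral_const_mul]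
        refine integral_congr_ae ?_
        filter_upwards [Lp.coeFn_smul c v] with x hx
        rw [hx, Pi.smul_apply, smul_eq_mul, mul_left_comm] }
    (∫ x, ‖g x‖ ∂μ) (norm_integral_mul_coeFn_top_le hg)

lemma integralMulCLM_apply {g : Ω → ℝ} (hg : Integrable g μ) (v : Lp ℝ ⊤ μ) :
    integralMulCLM hg v = ∫ x, g x * v x ∂μ := rfl

lemma integralMulCLM_const_one [IsFiniteMeasure μ] {g : Ω → ℝ} (hg : Integrable g μ) :
    integralMulCLM hg (Lp.const ⊤ μ 1) = ∫ x, g x ∂μ := by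
  rw [integralMulCLM_apply]
  refine integral_congr_ae ?_
  filter_upwards [Lp.coeFn_const (p := ⊤) μ (1 : ℝ)] with x hx
  rw [hx, Function.const_apply, mul_one]

lemma norm_integralMulCLM_of_nonneg [IsFiniteMeasure μ] [NeZero μ] {g : Ω → ℝ}
    (hg : Integrable g μ) (hg_nonneg : 0 ≤ᵐ[μ] g) :
    ‖integralMulCLM hg‖ = ∫ x, g x ∂μ := by
  have hnorm_g : ∫ x, ‖g x‖ ∂μ = ∫ x, g x ∂μ := by
    refine integral_congr_ae ?_
    filter_upwards [hg_nonneg] with x hx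
    exact Real.norm_of_nonneg hx
  refine le_antisymm ?_ ?_
  · exact hnorm_g ▸ LinearMap.mkContinuous_norm_le _ (integral_nonneg fun _ ↦ norm_nonneg _) _
  · have hone : ‖Lp.const ⊤ μ (1 : ℝ)‖ = 1 := by
      simpa using Lp.norm_const (p := ⊤) (μ := μ) (c := (1 : ℝ)) (by simp)
    have h := (integralMulCLM hg).le_opNorm (Lp.const ⊤ μ 1)
    rwa [integralMulCLM_const_one, hone, mul_one,
      Real.norm_of_nonneg (integral_nonneg_of_ae hg_nonneg)] at h

lemma integral_exp_const_mul_add_sub [IsFiniteMeasure μ] (k : ℝ) (u h : Lp ℝ ⊤ μ) :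
    ∫ x, Real.exp (k * (u + h) x) ∂μ - ∫ x, Real.exp (k * u x) ∂μ
        - k * ∫ x, Real.exp (k * u x) * h x ∂μ
      = ∫ x, Real.exp (k * u x) * (Real.exp (k * h x) - 1 - k * h x) ∂μ := by
  have hexp := integrable_exp_const_mul k u
  rw [← integral_sub (integrable_exp_const_mul k (u + h)) hexp, ← integral_const_mul,
    ← integral_sub (by exact (integrable_exp_const_mul k (u + h)).sub hexp)
      ((integrable_mul_coeFn_top hexp h).const_mul k)]
  refine integral_congr_ae ?_
  filter_upwards [Lp.coeFn_add u h] with x hx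
  rw [hx, Pi.add_apply, mul_add, Real.exp_add]
  ring

lemma hasFDerivAt_integral_exp_const_mul [IsFiniteMeasure μ] (k : ℝ) (u : Lp ℝ ⊤ μ) :
    HasFDerivAt (fun w : Lp ℝ ⊤ μ ↦ ∫ x, Real.exp (k * w x) ∂μ)
      (k • integralMulCLM (integrable_exp_const_mul k u)) u := by
  rw [hasFDerivAt_iff_isLittleO_nhds_zero]
  refine IsBigO.trans_isLittleO ?_ (isLittleO_norm_pow_id one_lt_two)
  refine .of_bound (k ^ 2 * ∫ x, Real.exp (k * u x) ∂μ) ?_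
  filter_upwards [Metric.ball_mem_nhds 0 (by positivity : (0 : ℝ) < 1 / (|k| + 1))] with h hh
  have hkh : |k| * ‖h‖ ≤ 1 := by
    rw [mem_ball_zero_iff, lt_div_iff₀ (by positivity)] at hh
    nlinarith [abs_nonneg k, norm_nonneg h]
  rw [smul_apply, integralMulCLM_apply, smul_eq_mul,
    integral_exp_const_mul_add_sub, norm_pow, norm_norm, mul_assoc,
    ← integral_mul_const (‖h‖ ^ 2) fun x ↦ Real.exp (k * u x), ← integral_const_mul]
  refine norm_integral_le_of_norm_le (((integrable_exp_const_mul k u).mul_const _).const_mul _) ?_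
  filter_upwards [ae_abs_le_norm_top h] with x hx
  have hsmall : |k * h x| ≤ 1 := by
    rw [abs_mul]; exact (mul_le_mul_of_nonneg_left hx (abs_nonneg k)).trans hkh
  calc ‖Real.exp (k * u x) * (Real.exp (k * h x) - 1 - k * h x)‖
      = Real.exp (k * u x) * |Real.exp (k * h x) - 1 - k * h x| := by
        rw [norm_mul, Real.norm_of_nonneg (Real.exp_pos _).le, Real.norm_eq_abs]
    _ ≤ Real.exp (k * u x) * (k * h x) ^ 2 := by
        gcongr; exact Real.abs_exp_sub_one_sub_id_le hsmall
    _ ≤ Real.exp (k * u x) * (k ^ 2 * ‖h‖ ^ 2) := by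
        rw [mul_pow, ← sq_abs (h x)]; gcongr
    _ = k ^ 2 * (Real.exp (k * u x) * ‖h‖ ^ 2) := by ring

end MeasureTheory.Lp

/-- Fréchet differentiability of LogIntExp on L∞ with the stated derivative,
whose dual norm equals 1. -/
theorem stmt18 {Ω : Type*} [MeasurableSpace Ω] (μ : Measure Ω) [IsFiniteMeasure μ]
    (hμ : 0 < (μ Set.univ).toReal) (k : ℝ) (hk : 0 < k) (u : Lp ℝ ⊤ μ) :
    ∃ D : Lp ℝ ⊤ μ →L[ℝ] ℝ,
      (∀ v : Lp ℝ ⊤ μ,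
        D v = (∫ x, Real.exp (k * u x) * v x ∂μ) / ∫ x, Real.exp (k * u x) ∂μ) ∧
      HasFDerivAt (fun w : Lp ℝ ⊤ μ => (1 / k) * Real.log (∫ x, Real.exp (k * w x) ∂μ)) D u ∧
      ‖D‖ = 1 := by
  have : NeZero μ := ⟨fun h0 ↦ by simp [h0] at hμ⟩
  have hexp := Lp.integrable_exp_const_mul k u
  have hI : 0 < ∫ x, Real.exp (k * u x) ∂μ := integral_exp_pos hexp
  refine ⟨(∫ x, Real.exp (k * u x) ∂μ)⁻¹ • Lp.integralMulCLM hexp, fun v ↦ ?_, ?_, ?_⟩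
  · rw [smul_apply, Lp.integralMulCLM_apply, smul_eq_mul, inv_mul_eq_div]
  · refine (((Lp.hasFDerivAt_integral_exp_const_mul k u).log hI.ne').const_mul
      (1 / k)).congr_fderiv ?_
    rw [smul_smul, smul_smul, one_div_mul_eq_div, div_mul_cancel₀ _ hk.ne']
  · rw [norm_smul, Lp.norm_integralMulCLM_of_nonneg hexp (ae_of_all _ fun _ ↦ (Real.exp_pos _).le),
      norm_inv, Real.norm_of_nonneg hI.le, inv_mul_cancel₀ hI.ne']
end
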